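/- arXiv:2305.05307 — 3 statements merged into one kernel-verified Lean document; each statement's English description precedes it below -/
import Mathlib

section
/- Let G be a strongly connected semi-complete directed graph on n ≥ 4 vertices. Then there exist two distinct vertices i and j such that both induced subgraphs G(i) and G(j), obtained from G by deleting vertex i (respectively j) together with all incident edges, are strongly connected. -/
/-!
Every vertex `v` lies on a cycle of length `n - 1` (Moon). Grow a cycle through `v` one vertex at
a time: an outside vertex with both an in- and an out-neighbour on the cycle can be inserted
between them; if there is none, strong connectivity produces an edge `b → a` between outside
vertices with the whole cycle pointing to `b` and `a` pointing to the whole cycle, and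
`v → b → a` replaces the successor of `v`. Deleting the vertex missed by a cycle of length
`n - 1` leaves a strongly connected graph, and a cycle of length `n - 1` through that vertex
misses a second one.
-/

/-- A digraph (edge relation) is semi-complete if between any two distinct vertices there is
an edge in at least one direction. -/
def SemiComplete {V : Type*} (r : V → V → Prop) : Prop :=
  ∀ i j : V, i ≠ j → (r i j ∨ r j i)

/-- A digraph is strongly connected if for every pair of distinct vertices there is a
directed path from one to the other. -/
def StronglyConnected {V : Type*} (r : V → V → Prop) : Prop :=
  ∀ i j : V, i ≠ j → Relation.ReflTransGen r i j

/-- The subgraph of `r` induced by deleting vertex `i` (restriction of `r` to the remaining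
vertices). -/
def delGraph {V : Type*} (r : V → V → Prop) (i : V) :
    {x : V // x ≠ i} → {x : V // x ≠ i} → Prop :=
  fun a b => r a.1 b.1

open List Relation

variable {V : Type*} {r : V → V → Prop}

theorem StronglyConnected.mem_of_closed (hsc : StronglyConnected r) {S : Set V}
    (hS : ∀ x ∈ S, ∀ y, r x y → y ∈ S) {x : V} (hx : x ∈ S) (y : V) : y ∈ S := by
  rcases eq_or_ne x y with rfl | hxy
  · exact hx
  · have hpath := hsc x y hxy
    clear hxy
    induction hpath with
    | refl => exact hx
    | tail _ hab ih => exact hS _ ih _ hab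

theorem SemiComplete.rel_of_not_rel (hsemi : SemiComplete r) {x y : V} (hxy : x ≠ y)
    (h : ¬ r y x) : r x y :=
  (hsemi x y hxy).resolve_right h

theorem reflTransGen_of_isChain {a b : V} :
    ∀ {m : List V}, IsChain r (a :: m ++ [b]) → ∀ x ∈ a :: m,
      ReflTransGen r a x ∧ ReflTransGen r x b
  | [], h, x, hx => by
    obtain rfl : x = a := by simpa using hx
    exact ⟨.refl, .single (isChain_pair.1 h)⟩
  | c :: m, h, x, hx => by
    simp only [cons_append, isChain_cons_cons] at h
    have ih := reflTransGen_of_isChain h.2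
    rcases mem_cons.1 hx with rfl | hx
    · exact ⟨.refl, .head h.1 (ih c mem_cons_self).2⟩
    · exact ⟨.head h.1 (ih x hx).1, (ih x hx).2⟩

theorem stronglyConnected_of_isChain {a : V} {m : List V} (h : IsChain r (a :: m ++ [a]))
    (hall : ∀ x, x ∈ a :: m) : StronglyConnected r := fun i j _ =>
  (reflTransGen_of_isChain h i (hall i)).2.trans (reflTransGen_of_isChain h j (hall j)).1

theorem stronglyConnected_delGraph_of_isChain {v w : V} {l : List V}
    (h : IsChain r (v :: l ++ [v])) (hall : ∀ y, y ∈ v :: l ↔ y ≠ w) :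
    StronglyConnected (delGraph r w) := by
  have hne : ∀ y ∈ v :: l ++ [v], y ≠ w := fun y hy =>
    (hall y).1 ((mem_append.1 hy).elim id fun h => mem_singleton.1 h ▸ mem_cons_self)
  have hchain := (isChain_attachWith hne (r := delGraph r w)).2
    (h.imp_of_mem_imp fun a b ha hb hab => ⟨hne a ha, hne b hb, hab⟩)
  have hl : ∀ y ∈ l, y ≠ w := fun y hy => hne y (by simp [hy])
  refine stronglyConnected_of_isChain (a := ⟨v, hne v (by simp)⟩) (m := l.attachWith _ hl) ?_ ?_
  · simpa [attachWith_append] using hchain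
  · intro x
    simpa [Subtype.ext_iff] using (hall x).2 x.2

theorem stronglyConnected_reflGen_iff : StronglyConnected (ReflGen r) ↔ StronglyConnected r := by
  simp only [StronglyConnected, reflTransGen_reflGen]

theorem delGraph_reflGen (w : V) : delGraph (ReflGen r) w = ReflGen (delGraph r w) := by
  ext a b
  simp only [delGraph, reflGen_iff, Subtype.ext_iff]

theorem exists_isChain_insert (hsemi : SemiComplete r) {w y : V} (hwy : r w y) {x : V}
    {m : List V} (hch : IsChain r (x :: m ++ [y])) (hw : w ∉ x :: m)
    (hin : ∃ p ∈ x :: m, r p w) : ∃ m', IsChain r (x :: m' ++ [y]) ∧ m'.Perm (w :: m) := by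
  induction m generalizing x with
  | nil =>
    obtain ⟨p, hp, hpw⟩ := hin
    obtain rfl : p = x := by simpa using hp
    exact ⟨[w], by simp [isChain_cons_cons, hpw, hwy], .refl _⟩
  | cons c m ih =>
    simp only [cons_append, isChain_cons_cons] at hch
    by_cases hdirect : r x w ∧ r w c
    · exact ⟨w :: c :: m, by simpa [isChain_cons_cons, hdirect] using hch.2, .refl _⟩
    have hin' : ∃ p ∈ c :: m, r p w := by
      by_cases hxw : r x w
      · exact ⟨c, mem_cons_self, hsemi.rel_of_not_rel (by grind) fun h => hdirect ⟨hxw, h⟩⟩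
      · obtain ⟨p, hp, hpw⟩ := hin
        exact ⟨p, (mem_cons.1 hp).resolve_left (by grind), hpw⟩
    obtain ⟨m', hch', hperm⟩ := ih hch.2 (fun h => hw (mem_cons_of_mem x h)) hin'
    exact ⟨c :: m', isChain_cons_cons.2 ⟨hch.1, hch'⟩, (hperm.cons c).trans (.swap w c m)⟩

/-- `v :: l` traversed cyclically; `IsCycle r v []` is a loop at `v`. -/
def IsCycle (r : V → V → Prop) (v : V) (l : List V) : Prop :=
  (v :: l).Nodup ∧ IsChain r (v :: l ++ [v])

theorem IsCycle.of_perm {v w : V} {l l' : List V} (hc : IsCycle r v l) (hw : w ∉ v :: l)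
    (hch : IsChain r (v :: l' ++ [v])) (hperm : l'.Perm (w :: l)) :
    IsCycle r v l' := by
  refine ⟨(hperm.cons v).nodup_iff.2 ?_, hch⟩
  exact ((Perm.swap w v l).nodup_iff.2 (nodup_cons.2 ⟨hw, hc.1⟩))

theorem IsCycle.exists_insert (hsemi : SemiComplete r) {v w : V} {l : List V}
    (hc : IsCycle r v l) (hw : w ∉ v :: l) (hin : ∃ a ∈ v :: l, r a w)
    (hout : ∃ b ∈ v :: l, r w b) : ∃ l', IsCycle r v l' ∧ l'.length = l.length + 1 := by
  suffices ∃ l', IsChain r (v :: l' ++ [v]) ∧ l'.Perm (w :: l) by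
    obtain ⟨l', hch, hperm⟩ := this
    exact ⟨l', hc.of_perm hw hch hperm, by simp [hperm.length_eq]⟩
  by_cases hwv : r w v
  · exact exists_isChain_insert hsemi hwv hc.2 hw hin
  have hvw : r v w := hsemi.rel_of_not_rel (by grind) hwv
  obtain ⟨b, hb, hwb⟩ := hout
  obtain ⟨l₁, l₂, rfl⟩ := append_of_mem ((mem_cons.1 hb).resolve_left (by grind))
  have hch := hc.2
  rw [show v :: (l₁ ++ b :: l₂) ++ [v] = v :: l₁ ++ b :: (l₂ ++ [v]) by simp,
    isChain_split] at hch
  obtain ⟨m', hch', hperm⟩ :=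
    exists_isChain_insert hsemi hwb hch.1 (by simp_all) ⟨v, mem_cons_self, hvw⟩
  refine ⟨m' ++ b :: l₂, ?_, by simpa using hperm.append_right (b :: l₂)⟩
  rw [show v :: (m' ++ b :: l₂) ++ [v] = v :: m' ++ b :: (l₂ ++ [v]) by simp, isChain_split]
  exact ⟨hch', hch.2⟩

/-- If no vertex outside `S` has both an in- and an out-neighbour in `S`, then `Sᶜ` would be closed
unless some outside vertex has no in-neighbour in `S`, and `S` together with its out-neighbours
would be closed unless one of them has an edge to such a vertex. -/
theorem exists_dominated_rel_dominating (hsemi : SemiComplete r) (hsc : StronglyConnected r)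
    {S : Set V} {v w : V} (hv : v ∈ S) (hw : w ∉ S)
    (hmix : ∀ x ∉ S, (∃ c ∈ S, r c x) → ∀ c ∈ S, ¬ r x c) :
    ∃ b a, b ∉ S ∧ a ∉ S ∧ b ≠ a ∧ (∀ c ∈ S, r c b) ∧ r b a ∧ ∀ c ∈ S, r a c := by
  have hsource : ∃ a ∉ S, ∀ c ∈ S, ¬ r c a := by
    by_contra! h
    refine hsc.mem_of_closed (S := Sᶜ) (fun x hx y hxy hy => ?_) hw v hv
    exact hmix x hx (h x hx) y hy hxy
  have hedge : ∃ b ∉ S, (∃ c ∈ S, r c b) ∧ ∃ a ∉ S, (∀ c ∈ S, ¬ r c a) ∧ r b a := by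
    by_contra! h
    obtain ⟨a, ha, haS⟩ := hsource
    have hclosed : ∀ x ∈ {x | x ∈ S ∨ ∃ c ∈ S, r c x}, ∀ y, r x y →
        y ∈ {x | x ∈ S ∨ ∃ c ∈ S, r c x} := by
      rintro x hx y hxy
      by_contra! hy
      simp only [Set.mem_ofPred_eq, not_or, not_exists, not_and] at hx hy
      by_cases hxS : x ∈ S
      · exact hy.2 x hxS hxy
      · exact h x hxS (hx.resolve_left hxS) y hy.1 hy.2 hxy
    rcases hsc.mem_of_closed hclosed (Or.inl hv) a with haS' | ⟨c, hc, hca⟩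
    · exact ha haS'
    · exact haS c hc hca
  obtain ⟨b, hb, ⟨c, hc, hcb⟩, a, ha, haS, hba⟩ := hedge
  refine ⟨b, a, hb, ha, fun h => haS c hc (h ▸ hcb), fun d hd => ?_, hba, fun d hd => ?_⟩
  · exact hsemi.rel_of_not_rel (fun h => hb (h ▸ hd)) (hmix b hb ⟨c, hc, hcb⟩ d hd)
  · exact hsemi.rel_of_not_rel (fun h => ha (h ▸ hd)) (haS d hd)

theorem IsCycle.cons_cons_tail {v a b : V} {l : List V} (hc : IsCycle r v l) (hb : b ∉ v :: l)
    (ha : a ∉ v :: l) (hab : b ≠ a) (hvb : r v b) (hba : r b a) (haC : ∀ c ∈ v :: l, r a c) :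
    IsCycle r v (b :: a :: l.tail) := by
  rcases l with _ | ⟨z, t⟩
  · refine ⟨by grind [nodup_cons], ?_⟩
    simp [isChain_cons_cons, hvb, hba, haC]
  · refine ⟨?_, ?_⟩
    · have := hc.1
      grind [nodup_cons]
    · have := hc.2
      simp only [cons_append, isChain_cons_cons, tail_cons] at this ⊢
      refine ⟨hvb, hba, this.2.tail.cons fun y hy => haC y ?_⟩
      have := mem_of_mem_head? hy
      simp only [tail_cons, mem_append, mem_cons] at this ⊢
      tauto

theorem IsCycle.exists_longer (hsemi : SemiComplete r) (hsc : StronglyConnected r) {v w : V}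
    {l : List V} (hc : IsCycle r v l) (hw : w ∉ v :: l) :
    ∃ l', IsCycle r v l' ∧ l.length < l'.length ∧ l'.length ≤ max (l.length + 1) 2 := by
  by_cases hmix : ∃ x ∉ v :: l, (∃ a ∈ v :: l, r a x) ∧ ∃ b ∈ v :: l, r x b
  · obtain ⟨x, hx, hin, hout⟩ := hmix
    obtain ⟨l', hc', hlen⟩ := hc.exists_insert hsemi hx hin hout
    exact ⟨l', hc', by omega, by omega⟩
  · push Not at hmix
    obtain ⟨b, a, hb, ha, hab, hCb, hba, haC⟩ :=
      exists_dominated_rel_dominating (S := {x | x ∈ v :: l}) hsemi hsc mem_cons_self hw hmix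
    refine ⟨b :: a :: l.tail, hc.cons_cons_tail hb ha hab (hCb v mem_cons_self) hba haC, ?_⟩
    cases l <;> simp

theorem List.Nodup.card_compl_toFinset [Fintype V] [DecidableEq V] {l : List V} (hl : l.Nodup) :
    l.toFinsetᶜ.card = Fintype.card V - l.length := by
  rw [Finset.card_compl, toFinset_card_of_nodup hl]

theorem IsCycle.exists_length_add_two_eq_card [Fintype V] (hsemi : SemiComplete r)
    (hsc : StronglyConnected r) (hcard : 4 ≤ Fintype.card V) {v : V} {l : List V}
    (hc : IsCycle r v l) (hlen : l.length + 2 ≤ Fintype.card V) :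
    ∃ l', IsCycle r v l' ∧ l'.length + 2 = Fintype.card V := by
  classical
  rcases hlen.eq_or_lt with heq | hlt
  · exact ⟨l, hc, heq⟩
  obtain ⟨w, hw⟩ := Finset.card_pos.1 (by rw [hc.1.card_compl_toFinset]; simp; omega)
  obtain ⟨l', hc', hgt, hle⟩ := hc.exists_longer hsemi hsc (by simpa using hw)
  exact hc'.exists_length_add_two_eq_card hsemi hsc hcard (by omega)
termination_by Fintype.card V - l.length

theorem exists_ne_stronglyConnected_delGraph [Fintype V] (hsemi : SemiComplete r)
    (hsc : StronglyConnected r) (hcard : 4 ≤ Fintype.card V) (v : V) :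
    ∃ w ≠ v, StronglyConnected (delGraph r w) := by
  classical
  -- Loops let the growth start from the cycle `[v]`; they do not change reachability.
  have hloop : IsCycle (ReflGen r) v [] := ⟨nodup_singleton v, isChain_pair.2 .refl⟩
  obtain ⟨l, hc, hlen⟩ := hloop.exists_length_add_two_eq_card
    (fun i j h => (hsemi i j h).imp .single .single) (stronglyConnected_reflGen_iff.2 hsc) hcard
    (by simp; omega)
  obtain ⟨w, hw⟩ := Finset.card_eq_one.1 (by rw [hc.1.card_compl_toFinset]; simp; omega)
  have hall : ∀ y, y ∈ v :: l ↔ y ≠ w := fun y => by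
    have := Finset.ext_iff.1 hw y
    rw [Finset.mem_compl, mem_toFinset, Finset.mem_singleton] at this
    exact (not_iff_comm.1 this).symm
  refine ⟨w, fun h => (hall v).1 mem_cons_self h.symm, ?_⟩
  rw [← stronglyConnected_reflGen_iff, ← delGraph_reflGen]
  exact stronglyConnected_delGraph_of_isChain hc.2 hall

/-- a strongly connected semi-complete digraph on `n ≥ 4` vertices has at least
two strongly connected vertex-deleted induced subgraphs on `n - 1` vertices. -/
theorem two_deletable_vertices_of_stronglyConnected_semiComplete {n : ℕ} (hn : 4 ≤ n)
    (r : Fin n → Fin n → Prop) (hsemi : SemiComplete r) (hsc : StronglyConnected r) :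
    ∃ i j : Fin n, i ≠ j ∧ StronglyConnected (delGraph r i) ∧
      StronglyConnected (delGraph r j) := by
  have hcard : 4 ≤ Fintype.card (Fin n) := by simpa using hn
  obtain ⟨i, -, hi⟩ := exists_ne_stronglyConnected_delGraph hsemi hsc hcard ⟨0, by omega⟩
  obtain ⟨j, hji, hj⟩ := exists_ne_stronglyConnected_delGraph hsemi hsc hcard i
  exact ⟨i, j, hji.symm, hi, hj⟩
end

section
/- Let A be an n-by-n reciprocal matrix with n ≥ 4, and let w be an efficient vector for A. Then for every p ∈ {3,…,n−1} there exist two distinct subsets K_1, K_2 ⊂ {1,…,n}, each of cardinality p, such that w[K_1] is efficient for A[K_1] and w[K_2] is efficient for A[K_2]. -/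
/-!
Let `G(A, w)` be the digraph with an arc `i → j` whenever `w i / w j ≤ a_ij`. By a theorem of
Blanquero, Carrizosa and Conde, `w` is efficient for `A` exactly when `G(A, w)` is strongly
connected, and `G(A[K], w[K])` is the subdigraph of `G(A, w)` induced on `K`. Reciprocity makes
`G(A, w)` semicomplete. In a strong semicomplete digraph a strong induced subdigraph `K ∋ x`
with `2 ≤ |K| < n` grows by one vertex: either some outside vertex has arcs both from and to
`K`, or there is an arc `u → q` from a vertex dominated by `K` to one dominating `K`, and then
`u, q` can replace any vertex of `K` other than `x`. Starting from a `3`-set through `x` this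
gives strong induced subdigraphs of every order `p ≥ 3` through any vertex; taking one and then
another through a vertex outside the first gives the two sets.
-/

def PosVec {ι : Type*} (w : ι → ℝ) : Prop := ∀ i, 0 < w i

def IsReciprocal {ι : Type*} (A : Matrix ι ι ℝ) : Prop :=
  (∀ i j, 0 < A i j) ∧ ∀ i j, A j i = 1 / A i j

def IsEfficient {ι : Type*} (A : Matrix ι ι ℝ) (w : ι → ℝ) : Prop :=
  PosVec w ∧ ∀ v : ι → ℝ, PosVec v →
    (∀ i j, |A i j - v i / v j| ≤ |A i j - w i / w j|) →
    ∃ c : ℝ, 0 < c ∧ v = c • w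

/-- The principal submatrix `A[K]` of `A` obtained by retaining the rows and columns indexed
by `K`. -/
def keepMat {n : ℕ} (A : Matrix (Fin n) (Fin n) ℝ) (K : Finset (Fin n)) :
    Matrix {i : Fin n // i ∈ K} {i : Fin n // i ∈ K} ℝ :=
  Matrix.of fun a b => A a.1 b.1

/-- The subvector `w[K]` of `w` obtained by retaining the entries indexed by `K`. -/
def keepVec {n : ℕ} (w : Fin n → ℝ) (K : Finset (Fin n)) : {i : Fin n // i ∈ K} → ℝ :=
  fun a => w a.1

open Relation Filter Topology

section StrongConnectivity

variable {V : Type*} {r : V → V → Prop}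

def inducedRel (r : V → V → Prop) (s : Set V) (x y : V) : Prop := x ∈ s ∧ y ∈ s ∧ r x y

def IsStrongOn (r : V → V → Prop) (s : Set V) : Prop :=
  ∀ a ∈ s, ∀ b ∈ s, ReflTransGen (inducedRel r s) a b

theorem mem_of_reflTransGen_of_forall_rel_mem {S : Set V} (hS : ∀ a ∈ S, ∀ b, r a b → b ∈ S)
    {a b : V} (ha : a ∈ S) (hab : ReflTransGen r a b) : b ∈ S := by
  induction hab with
  | refl => exact ha
  | tail _ hbc ih => exact hS _ ih _ hbc

theorem IsStrongOn.reflTransGen_subtype {s : Set V} (hs : IsStrongOn r s) (a b : s) :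
    ReflTransGen (fun x y : s => r x y) a b := by
  suffices ∀ y, ReflTransGen (inducedRel r s) a y → ∀ hy : y ∈ s,
      ReflTransGen (fun x y : s => r x y) a ⟨y, hy⟩ from this b (hs a a.2 b b.2) b.2
  intro y hay
  induction hay with
  | refl => exact fun _ => ReflTransGen.refl
  | tail _ hcd ih => exact fun _ => (ih hcd.1).tail hcd.2.2

theorem isStrongOn_singleton (x : V) : IsStrongOn r {x} := by
  rintro a rfl b rfl
  exact ReflTransGen.refl

theorem isStrongOn_insert {s : Set V} (hs : IsStrongOn r s) {v a b : V} (ha : a ∈ s)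
    (hav : r a v) (hb : b ∈ s) (hvb : r v b) : IsStrongOn r (insert v s) := by
  have lift : ∀ x ∈ s, ∀ y ∈ s, ReflTransGen (inducedRel r (insert v s)) x y :=
    fun x hx y hy =>
      ReflTransGen.mono (p := inducedRel r (insert v s))
        (fun _ _ h => ⟨Or.inr h.1, Or.inr h.2.1, h.2.2⟩) x y (hs x hx y hy)
  have to_v : ∀ x ∈ s, ReflTransGen (inducedRel r (insert v s)) x v :=
    fun x hx => (lift x hx a ha).tail ⟨Or.inr ha, Or.inl rfl, hav⟩
  have from_v : ∀ y ∈ s, ReflTransGen (inducedRel r (insert v s)) v y :=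
    fun y hy => (lift b hb y hy).head ⟨Or.inl rfl, Or.inr hb, hvb⟩
  rintro x (rfl | hx) y (rfl | hy)
  · exact ReflTransGen.refl
  · exact from_v y hy
  · exact to_v x hx
  · exact lift x hx y hy

theorem isStrongOn_insert_insert {t : Set V} {u q : V} (ht : t.Nonempty)
    (htu : ∀ a ∈ t, r a u) (huq : r u q) (hqt : ∀ b ∈ t, r q b) :
    IsStrongOn r (insert u (insert q t)) := by
  set R := inducedRel r (insert u (insert q t))
  obtain ⟨c, hc⟩ := ht
  have hu : u ∈ insert u (insert q t) := Or.inl rfl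
  have hq : q ∈ insert u (insert q t) := Or.inr (Or.inl rfl)
  have hmem : ∀ a ∈ t, a ∈ insert u (insert q t) := fun a ha => Or.inr (Or.inr ha)
  have to_u : ∀ x ∈ insert u (insert q t), ReflTransGen R x u := by
    rintro x (rfl | rfl | hx)
    · exact ReflTransGen.refl
    · exact (ReflTransGen.single ⟨hq, hmem c hc, hqt c hc⟩).tail ⟨hmem c hc, hu, htu c hc⟩
    · exact ReflTransGen.single ⟨hmem x hx, hu, htu x hx⟩
  have from_u : ∀ y ∈ insert u (insert q t), ReflTransGen R u y := by
    rintro y (rfl | rfl | hy)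
    · exact ReflTransGen.refl
    · exact ReflTransGen.single ⟨hu, hq, huq⟩
    · exact (ReflTransGen.single ⟨hu, hq, huq⟩).tail ⟨hq, hmem y hy, hqt y hy⟩
  exact fun x hx y hy => (to_u x hx).trans (from_u y hy)

theorem exists_insert_or_exists_bypass (hsc : ∀ a b, a ≠ b → r a b ∨ r b a)
    (hr : ∀ a b, ReflTransGen r a b) {s : Set V} (hs : s.Nonempty) (hcompl : sᶜ.Nonempty) :
    (∃ v ∉ s, (∃ a ∈ s, r a v) ∧ ∃ b ∈ s, r v b) ∨
      ∃ u q, u ∉ s ∧ q ∉ s ∧ u ≠ q ∧ (∀ a ∈ s, r a u) ∧ r u q ∧ ∀ b ∈ s, r q b := by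
  by_contra! h
  obtain ⟨hnone, hnobypass⟩ := h
  have dominated : ∀ v ∉ s, ∀ a ∈ s, ¬ r v a → r a v := fun v hv a ha hva =>
    (hsc a v (fun hav => hv (hav ▸ ha))).resolve_right hva
  set P := {v | v ∉ s ∧ ∃ a ∈ s, r a v}
  -- without a bypass, nothing leaves `P`
  have hP : ∀ u ∈ P, ∀ y, r u y → y ∈ P := by
    rintro u ⟨hus, a, ha, hau⟩ y huy
    have hys : y ∉ s := fun hys => hnone u hus ⟨a, ha, hau⟩ y hys huy
    by_contra hyP
    have hyin : ∀ b ∈ s, ¬ r b y := fun b hb hby => hyP ⟨hys, b, hb, hby⟩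
    obtain ⟨b, hb, hyb⟩ := hnobypass u y hus hys (fun huy' => hyP (huy' ▸ ⟨hus, a, ha, hau⟩))
      (fun b hb => dominated u hus b hb (hnone u hus ⟨a, ha, hau⟩ b hb)) huy
    exact hyb ((hsc y b (fun hyb => hys (hyb ▸ hb))).resolve_right (hyin b hb))
  obtain ⟨x, hx⟩ := hs
  obtain ⟨v, hv⟩ := hcompl
  rcases P.eq_empty_or_nonempty with hPe | ⟨u, hu⟩
  · have hs_closed : ∀ a ∈ s, ∀ y, r a y → y ∈ s := fun a ha y hay =>
      by_contra fun hy => (Set.eq_empty_iff_forall_notMem.mp hPe y) ⟨hy, a, ha, hay⟩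
    exact hv (mem_of_reflTransGen_of_forall_rel_mem hs_closed hx (hr x v))
  · exact (mem_of_reflTransGen_of_forall_rel_mem hP hu (hr u x)).1 hx

section Finite

variable [Fintype V] [DecidableEq V]

theorem exists_isStrongOn_card_succ (hsc : ∀ a b, a ≠ b → r a b ∨ r b a)
    (hr : ∀ a b, ReflTransGen r a b) {K : Finset V} (hK : IsStrongOn r K) {x : V} (hx : x ∈ K)
    (hK2 : 2 ≤ K.card) (hKV : K.card < Fintype.card V) :
    ∃ K' : Finset V, x ∈ K' ∧ K'.card = K.card + 1 ∧ IsStrongOn r K' := by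
  obtain ⟨z, -, hz⟩ := Finset.exists_mem_notMem_of_card_lt_card (t := Finset.univ) hKV
  rcases exists_insert_or_exists_bypass hsc hr ⟨x, hx⟩ ⟨z, hz⟩ with
    ⟨v, hv, ⟨a, ha, hav⟩, b, hb, hvb⟩ | ⟨u, q, hu, hq, huq, hKu, huq', hqK⟩
  · refine ⟨insert v K, Finset.mem_insert_of_mem hx, Finset.card_insert_of_notMem hv, ?_⟩
    rw [Finset.coe_insert]
    exact isStrongOn_insert hK ha hav hb hvb
  · -- `u` and `q` may replace any vertex `y ≠ x` of `K`
    obtain ⟨y, hy, hyx⟩ := Finset.exists_mem_ne hK2 x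
    have hxy : x ∈ K.erase y := Finset.mem_erase.mpr ⟨hyx.symm, hx⟩
    refine ⟨insert u (insert q (K.erase y)), by simp [hxy], ?_, ?_⟩
    · have hq' : q ∉ K.erase y := fun h => hq (Finset.mem_of_mem_erase h)
      have hu' : u ∉ insert q (K.erase y) := by
        simpa [huq] using fun h : u ∈ K.erase y => hu (Finset.mem_of_mem_erase h)
      rw [Finset.card_insert_of_notMem hu', Finset.card_insert_of_notMem hq',
        Finset.card_erase_of_mem hy]
      omega
    · rw [Finset.coe_insert, Finset.coe_insert]
      exact isStrongOn_insert_insert ⟨x, hxy⟩ (fun a ha => hKu a (Finset.mem_of_mem_erase ha))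
        huq' (fun b hb => hqK b (Finset.mem_of_mem_erase hb))

theorem exists_isStrongOn_card_three (hsc : ∀ a b, a ≠ b → r a b ∨ r b a)
    (hr : ∀ a b, ReflTransGen r a b) (hV : 3 ≤ Fintype.card V) (x : V) :
    ∃ K : Finset V, x ∈ K ∧ K.card = 3 ∧ IsStrongOn r K := by
  obtain ⟨z, hz⟩ := Finset.exists_mem_ne (s := Finset.univ) (by simp; omega) x
  rcases exists_insert_or_exists_bypass hsc hr (Set.singleton_nonempty x) ⟨z, hz.2⟩ with
    ⟨v, hv, ⟨a, ha, hav⟩, b, hb, hvb⟩ | ⟨u, q, hu, hq, huq, hxu, huq', hqx⟩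
  · have hvx : v ≠ x := hv
    have hK : IsStrongOn r (({v, x} : Finset V) : Set V) := by
      push_cast
      exact isStrongOn_insert (isStrongOn_singleton x) ha hav hb hvb
    simpa [Finset.card_pair hvx] using
      exists_isStrongOn_card_succ hsc hr hK (by simp) (by simp [Finset.card_pair hvx])
        (by rw [Finset.card_pair hvx]; omega)
  · refine ⟨{u, q, x}, by simp, Finset.card_eq_three.mpr ⟨u, q, x, huq, hu, hq, rfl⟩, ?_⟩
    push_cast
    exact isStrongOn_insert_insert (Set.singleton_nonempty x) hxu huq' hqx

/-- A form of Moon's theorem that strong tournaments are vertex-pancyclic. -/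
theorem exists_isStrongOn_card_eq (hsc : ∀ a b, a ≠ b → r a b ∨ r b a)
    (hr : ∀ a b, ReflTransGen r a b) (x : V) {p : ℕ} (hp : 3 ≤ p) (hpV : p ≤ Fintype.card V) :
    ∃ K : Finset V, x ∈ K ∧ K.card = p ∧ IsStrongOn r K := by
  induction p, hp using Nat.le_induction with
  | base => exact exists_isStrongOn_card_three hsc hr hpV x
  | succ p hp ih =>
    obtain ⟨K, hx, rfl, hK⟩ := ih (by omega)
    exact exists_isStrongOn_card_succ hsc hr hK hx (by omega) (by omega)

end Finite

end StrongConnectivity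

section Efficiency

variable {ι : Type*} {A : Matrix ι ι ℝ} {w : ι → ℝ}

/-- The digraph `G(A, w)` of Blanquero, Carrizosa and Conde. -/
def comparisonRel (A : Matrix ι ι ℝ) (w : ι → ℝ) (i j : ι) : Prop := w i / w j ≤ A i j

theorem comparisonRel_total (hA : IsReciprocal A) (i j : ι) :
    comparisonRel A w i j ∨ comparisonRel A w j i := by
  refine (le_total (w i / w j) (A i j)).imp id fun h => ?_
  have := one_div_le_one_div_of_le (hA.1 i j) h
  rwa [one_div_div, ← hA.2 i j] at this

theorem isEfficient_of_reflTransGen (hw : PosVec w)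
    (h : ∀ i j, ReflTransGen (comparisonRel A w) i j) : IsEfficient A w := by
  refine ⟨hw, fun v hv hvw => ?_⟩
  have arc : ∀ i j, comparisonRel A w i j → v j / w j ≤ v i / w i := by
    intro i j hij
    have hle := (abs_le.mp ((hvw i j).trans_eq (abs_of_nonneg (sub_nonneg.mpr hij)))).2
    have : w i / w j ≤ v i / v j := by linarith
    rw [div_le_div_iff₀ (hw j) (hv j)] at this
    rw [div_le_div_iff₀ (hw j) (hw i)]
    nlinarith [hv i, hv j]
  have path : ∀ i j, v j / w j ≤ v i / w i := by
    intro i j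
    induction h i j with
    | refl => exact le_rfl
    | tail _ hjk ih => exact (arc _ _ hjk).trans ih
  rcases isEmpty_or_nonempty ι with hι | ⟨⟨i₀⟩⟩
  · exact ⟨1, one_pos, Subsingleton.elim _ _⟩
  refine ⟨v i₀ / w i₀, div_pos (hv i₀) (hw i₀), funext fun j => ?_⟩
  have := le_antisymm (path i₀ j) (path j i₀)
  rw [div_eq_div_iff (hw j).ne' (hw i₀).ne'] at this
  simp only [Pi.smul_apply, smul_eq_mul]
  field_simp [(hw i₀).ne']
  linarith

theorem abs_sub_piecewise_div_le {R : Set ι} [DecidablePred (· ∈ R)] {t : ℝ}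
    (hA : IsReciprocal A) (hw : PosVec w) (ht1 : 1 ≤ t)
    (ht : ∀ i ∈ R, ∀ j ∉ R, t * (A i j * w j) ≤ w i) (i j : ι) :
    |A i j - R.piecewise w (t • w) i / R.piecewise w (t • w) j| ≤ |A i j - w i / w j| := by
  have closer : ∀ {a x y : ℝ}, y ∈ Set.uIcc x a → |a - y| ≤ |a - x| :=
    Set.abs_sub_right_of_mem_uIcc
  have hwi := hw i
  have hwj := hw j
  by_cases hi : i ∈ R <;> by_cases hj : j ∈ R <;>
    simp only [hi, hj, Set.piecewise_eq_of_mem, Set.piecewise_eq_of_notMem, not_false_eq_true,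
      Pi.smul_apply, smul_eq_mul]
  · exact le_rfl
  · have hlo : A i j ≤ w i / (t * w j) := by
      rw [le_div_iff₀ (by positivity)]
      linarith [ht i hi j hj]
    have hhi : w i / (t * w j) ≤ w i / w j :=
      div_le_div_of_nonneg_left hwi.le hwj (le_mul_of_one_le_left hwj.le ht1)
    exact closer (by rw [Set.uIcc_of_ge (hlo.trans hhi)]; exact ⟨hlo, hhi⟩)
  · have hlo : w i / w j ≤ t * w i / w j :=
      div_le_div_of_nonneg_right (le_mul_of_one_le_left hwi.le ht1) hwj.le
    have hhi : t * w i / w j ≤ A i j := by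
      rw [hA.2 j i, div_le_div_iff₀ hwj (hA.1 j i)]
      linarith [ht j hj i hi]
    exact closer (by rw [Set.uIcc_of_le (hlo.trans hhi)]; exact ⟨hlo, hhi⟩)
  · rw [mul_div_mul_left _ _ (zero_lt_one.trans_le ht1).ne']

theorem reflTransGen_of_isEfficient [Finite ι] (hA : IsReciprocal A) (hw : IsEfficient A w)
    (a b : ι) : ReflTransGen (comparisonRel A w) a b := by
  classical
  by_contra hab
  set R := {y | ReflTransGen (comparisonRel A w) a y}
  have hcross : ∀ i ∈ R, ∀ j ∉ R, A i j * w j < w i := fun i hi j hj =>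
    (lt_div_iff₀ (hw.1 j)).mp (not_le.mp fun hij => hj (ReflTransGen.tail hi hij))
  -- rescaling `w` off `R` by some `t > 1` close enough to `1` gives a vector dominating `w`
  have hevent : ∀ᶠ t in 𝓝[>] (1 : ℝ), ∀ i j, i ∈ R → j ∉ R → t * (A i j * w j) ≤ w i := by
    refine eventually_all.2 fun i => eventually_all.2 fun j => ?_
    by_cases hij : i ∈ R ∧ j ∉ R
    · have hpos : 0 < A i j * w j := mul_pos (hA.1 i j) (hw.1 j)
      have hlt : 1 < w i / (A i j * w j) := (one_lt_div hpos).mpr (hcross i hij.1 j hij.2)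
      filter_upwards [nhdsWithin_le_nhds (eventually_lt_nhds hlt)] with t ht _ _
      exact (le_div_iff₀ hpos).mp ht.le
    · exact Eventually.of_forall fun _ hi hj => absurd ⟨hi, hj⟩ hij
  obtain ⟨t, ht, ht1⟩ := (hevent.and self_mem_nhdsWithin).exists
  have hv : PosVec (R.piecewise w (t • w)) := fun x => by
    by_cases hx : x ∈ R
    · simpa [hx] using hw.1 x
    · simpa [hx] using mul_pos (zero_lt_one.trans ht1) (hw.1 x)
  obtain ⟨c, -, hc⟩ :=
    hw.2 _ hv (abs_sub_piecewise_div_le hA hw.1 ht1.le fun i hi j hj => ht i j hi hj)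
  have haR : a ∈ R := ReflTransGen.refl
  have hbR : b ∉ R := hab
  have ha : 1 * w a = c * w a := by simpa [haR] using congrFun hc a
  have hb : t * w b = c * w b := by simpa [hbR] using congrFun hc b
  have hc1 := mul_right_cancel₀ (hw.1 a).ne' ha
  have hct := mul_right_cancel₀ (hw.1 b).ne' hb
  linarith

end Efficiency

theorem isEfficient_keepMat_of_isStrongOn {n : ℕ} {A : Matrix (Fin n) (Fin n) ℝ}
    {w : Fin n → ℝ} (hw : PosVec w) {K : Finset (Fin n)}
    (hK : IsStrongOn (comparisonRel A w) K) : IsEfficient (keepMat A K) (keepVec w K) :=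
  isEfficient_of_reflTransGen (fun a => hw a) fun a b =>
    hK.reflTransGen_subtype ⟨a, a.2⟩ ⟨b, b.2⟩

theorem exists_two_efficient_principal_subvectors_general {n : ℕ}
    (A : Matrix (Fin n) (Fin n) ℝ) (hA : IsReciprocal A) (w : Fin n → ℝ)
    (hw : IsEfficient A w) (p : ℕ) (hp3 : 3 ≤ p) (hpn : p ≤ n - 1) :
    ∃ K₁ K₂ : Finset (Fin n), K₁ ≠ K₂ ∧ K₁.card = p ∧ K₂.card = p ∧
      IsEfficient (keepMat A K₁) (keepVec w K₁) ∧
      IsEfficient (keepMat A K₂) (keepVec w K₂) := by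
  have hsc : ∀ i j, i ≠ j → comparisonRel A w i j ∨ comparisonRel A w j i :=
    fun i j _ => comparisonRel_total hA i j
  have hr := reflTransGen_of_isEfficient hA hw
  have hpV : p ≤ Fintype.card (Fin n) := by rw [Fintype.card_fin]; omega
  obtain ⟨K₁, -, hK₁, hs₁⟩ := exists_isStrongOn_card_eq hsc hr ⟨0, by omega⟩ hp3 hpV
  obtain ⟨y, -, hy⟩ := Finset.exists_mem_notMem_of_card_lt_card (t := Finset.univ)
    (by rw [Finset.card_univ, Fintype.card_fin]; omega : K₁.card < Finset.univ.card)
  obtain ⟨K₂, hyK₂, hK₂, hs₂⟩ := exists_isStrongOn_card_eq hsc hr y hp3 hpV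
  exact ⟨K₁, K₂, fun h => hy (h ▸ hyK₂), hK₁, hK₂,
    isEfficient_keepMat_of_isStrongOn hw.1 hs₁, isEfficient_keepMat_of_isStrongOn hw.1 hs₂⟩

/-- if `n ≥ 4` and `w` is efficient for the reciprocal matrix `A`, then for
every `p ∈ {3, …, n-1}` there are two distinct `p`-element index sets `K₁`, `K₂` such that
`w[K₁]` is efficient for `A[K₁]` and `w[K₂]` is efficient for `A[K₂]`. -/
theorem exists_two_efficient_principal_subvectors {n : ℕ} (hn : 4 ≤ n)
    (A : Matrix (Fin n) (Fin n) ℝ) (hA : IsReciprocal A) (w : Fin n → ℝ)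
    (hw : IsEfficient A w) (p : ℕ) (hp3 : 3 ≤ p) (hpn : p ≤ n - 1) :
    ∃ K₁ K₂ : Finset (Fin n), K₁ ≠ K₂ ∧ K₁.card = p ∧ K₂.card = p ∧
      IsEfficient (keepMat A K₁) (keepVec w K₁) ∧
      IsEfficient (keepMat A K₂) (keepVec w K₂) :=
  exists_two_efficient_principal_subvectors_general A hA w hw p hp3 hpn
end

section
/- Let A = [a_ij] be an n-by-n reciprocal matrix, let x and y be efficient vectors for A(n), let t ∈ (0,1), and suppose that t·x + (1−t)·y is efficient for A(n). Then the following are equivalent: (1) for all efficient vectors w, v for A with w(n) = x and v(n) = y, the vector t·w + (1−t)·v is efficient for A; (2) x and y have the same maximal n-index and the same minimal n-index for A. -/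
/-- The principal submatrix `A(n)` obtained from an `(n+1)`-by-`(n+1)` matrix `A` by deleting
the last row and column. -/
def delLastMat {n : ℕ} (A : Matrix (Fin (n + 1)) (Fin (n + 1)) ℝ) :
    Matrix (Fin n) (Fin n) ℝ :=
  A.submatrix Fin.castSucc Fin.castSucc

/-- `x` and `y` have the same maximal `n`-index for `A`: some `p` simultaneously attains
`max_i x i / A i n` and `max_i y i / A i n` (`n` being the last index of `A`). -/
def SameMaxIndex {n : ℕ} (A : Matrix (Fin (n + 1)) (Fin (n + 1)) ℝ) (x y : Fin n → ℝ) : Prop :=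
  ∃ p : Fin n, (∀ i : Fin n,
      x i / A i.castSucc (Fin.last n) ≤ x p / A p.castSucc (Fin.last n)) ∧
    (∀ i : Fin n, y i / A i.castSucc (Fin.last n) ≤ y p / A p.castSucc (Fin.last n))

/-- `x` and `y` have the same minimal `n`-index for `A`: some `q` simultaneously attains
`min_i x i / A i n` and `min_i y i / A i n` (`n` being the last index of `A`). -/
def SameMinIndex {n : ℕ} (A : Matrix (Fin (n + 1)) (Fin (n + 1)) ℝ) (x y : Fin n → ℝ) : Prop :=
  ∃ q : Fin n, (∀ i : Fin n,
      x q / A q.castSucc (Fin.last n) ≤ x i / A i.castSucc (Fin.last n)) ∧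
    (∀ i : Fin n, y q / A q.castSucc (Fin.last n) ≤ y i / A i.castSucc (Fin.last n))

/-!
An efficient vector `z` for `A(n)` extends to an efficient vector for `A` by exactly those last
entries `c` with `min_i z_i / a_in ≤ c ≤ max_i z_i / a_in`: moving `c` towards this interval
brings every entry of the last row and column of `[w_i / w_j]` closer to `A`, while for `c` inside
it the two extreme indices pin down the last entry of any dominating vector. As the ratios
`z_i / a_in` depend linearly on `z`, condition (1) says that the maximum of
`t (x_i / a_in) + (1 - t) (y_i / a_in)` is at least `t max_i x_i / a_in + (1 - t) max_i y_i / a_in`,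
and dually for minima; this happens iff both maxima, and both minima, are attained at a common
index.
-/

open Set

section BetweenValues

variable {ι : Type*}

def BetweenValues (f : ι → ℝ) (c : ℝ) : Prop :=
  (∃ i, f i ≤ c) ∧ ∃ i, c ≤ f i

variable {f g : ι → ℝ} {t : ℝ}

lemma max_attained_of_convexComb_le {p p' i : ι} (ht0 : 0 < t) (ht1 : t < 1)
    (hp : ∀ j, f j ≤ f p) (hp' : ∀ j, g j ≤ g p')
    (h : t * f p + (1 - t) * g p' ≤ t * f i + (1 - t) * g i) :
    (∀ j, f j ≤ f i) ∧ ∀ j, g j ≤ g i := by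
  have hf : f p ≤ f i := by nlinarith [hp i, hp' i]
  have hg : g p' ≤ g i := by nlinarith [hp i, hp' i]
  exact ⟨fun j => (hp j).trans hf, fun j => (hp' j).trans hg⟩

lemma min_attained_of_le_convexComb {q q' i : ι} (ht0 : 0 < t) (ht1 : t < 1)
    (hq : ∀ j, f q ≤ f j) (hq' : ∀ j, g q' ≤ g j)
    (h : t * f i + (1 - t) * g i ≤ t * f q + (1 - t) * g q') :
    (∀ j, f i ≤ f j) ∧ ∀ j, g i ≤ g j := by
  have hf : f i ≤ f q := by nlinarith [hq i, hq' i]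
  have hg : g i ≤ g q' := by nlinarith [hq i, hq' i]
  exact ⟨fun j => hf.trans (hq j), fun j => hg.trans (hq' j)⟩

lemma forall_betweenValues_convexComb_iff [Finite ι] [Nonempty ι] (ht0 : 0 < t) (ht1 : t < 1) :
    (∀ a b, BetweenValues f a → BetweenValues g b →
        BetweenValues (t • f + (1 - t) • g) (t * a + (1 - t) * b)) ↔
      (∃ p, (∀ i, f i ≤ f p) ∧ ∀ i, g i ≤ g p) ∧ ∃ q, (∀ i, f q ≤ f i) ∧ ∀ i, g q ≤ g i := by
  constructor
  · intro h
    obtain ⟨p, hp⟩ := Finite.exists_max f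
    obtain ⟨p', hp'⟩ := Finite.exists_max g
    obtain ⟨q, hq⟩ := Finite.exists_min f
    obtain ⟨q', hq'⟩ := Finite.exists_min g
    obtain ⟨-, i, hi⟩ := h (f p) (g p') ⟨⟨p, le_rfl⟩, p, le_rfl⟩ ⟨⟨p', le_rfl⟩, p', le_rfl⟩
    obtain ⟨⟨j, hj⟩, -⟩ := h (f q) (g q') ⟨⟨q, le_rfl⟩, q, le_rfl⟩ ⟨⟨q', le_rfl⟩, q', le_rfl⟩
    exact ⟨⟨i, max_attained_of_convexComb_le ht0 ht1 hp hp' hi⟩,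
      ⟨j, min_attained_of_le_convexComb ht0 ht1 hq hq' hj⟩⟩
  · rintro ⟨⟨p, hfp, hgp⟩, q, hfq, hgq⟩ a b ⟨⟨i, hia⟩, i', hai'⟩ ⟨⟨j, hjb⟩, j', hbj'⟩
    refine ⟨⟨q, ?_⟩, p, ?_⟩ <;> simp only [Pi.add_apply, Pi.smul_apply, smul_eq_mul]
    · nlinarith [hfq i, hgq j]
    · nlinarith [hfp i', hgp j']

end BetweenValues

lemma inv_mem_uIcc_inv {a b x : ℝ} (ha : 0 < a) (hb : 0 < b) (hx : x ∈ uIcc a b) :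
    x⁻¹ ∈ uIcc a⁻¹ b⁻¹ := by
  rcases mem_uIcc.1 hx with ⟨hax, hxb⟩ | ⟨hbx, hxa⟩
  · exact mem_uIcc.2 (Or.inr ⟨inv_anti₀ (ha.trans_le hax) hxb, inv_anti₀ ha hax⟩)
  · exact mem_uIcc.2 (Or.inl ⟨inv_anti₀ (hb.trans_le hbx) hxa, inv_anti₀ hb hbx⟩)

lemma abs_sub_le_abs_sub_of_mem_uIcc {a b x : ℝ} (hx : x ∈ uIcc a b) : |a - x| ≤ |a - b| := by
  simpa only [abs_sub_comm] using abs_sub_left_of_mem_uIcc hx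

lemma le_of_abs_sub_le_abs_sub {a b x : ℝ} (hab : a ≤ b) (h : |a - x| ≤ |a - b|) : x ≤ b := by
  rw [abs_of_nonpos (sub_nonpos.2 hab)] at h
  linarith [neg_abs_le (a - x)]

lemma ge_of_abs_sub_le_abs_sub {a b x : ℝ} (hba : b ≤ a) (h : |a - x| ≤ |a - b|) : b ≤ x := by
  rw [abs_of_nonneg (sub_nonneg.2 hba)] at h
  linarith [le_abs_self (a - x)]

section Extension

variable {n : ℕ} {A : Matrix (Fin (n + 1)) (Fin (n + 1)) ℝ} {z : Fin n → ℝ} {c : ℝ}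

lemma eq_snoc_of_comp_castSucc_eq {α : Type*} {w : Fin (n + 1) → α} {x : Fin n → α}
    (h : w ∘ Fin.castSucc = x) : w = Fin.snoc x (w (Fin.last n)) := by
  subst h
  exact (Fin.snoc_init_self w).symm

lemma smul_snoc_add_smul_snoc (x y : Fin n → ℝ) (a b s t : ℝ) :
    s • (Fin.snoc x a : Fin (n + 1) → ℝ) + t • Fin.snoc y b =
      Fin.snoc (s • x + t • y) (s * a + t * b) := by
  funext i
  induction i using Fin.lastCases <;> simp

lemma PosVec.snoc (hz : PosVec z) (hc : 0 < c) : PosVec (Fin.snoc z c : Fin (n + 1) → ℝ) := by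
  intro i
  induction i using Fin.lastCases <;> simp [hc, hz _]

noncomputable def lastColRatio (A : Matrix (Fin (n + 1)) (Fin (n + 1)) ℝ) (z : Fin n → ℝ) (i : Fin n) : ℝ :=
  z i / A i.castSucc (Fin.last n)

lemma lastColRatio_smul_add_smul (A : Matrix (Fin (n + 1)) (Fin (n + 1)) ℝ) (x y : Fin n → ℝ)
    (s t : ℝ) : lastColRatio A (s • x + t • y) = s • lastColRatio A x + t • lastColRatio A y := by
  funext i
  simp only [lastColRatio, Pi.add_apply, Pi.smul_apply, smul_eq_mul]
  ring

lemma snoc_dominates_of_mem_uIcc (hA : IsReciprocal A) (hz : PosVec z) {c' : ℝ} (hc : 0 < c)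
    (hc' : 0 < c') (hbetween : ∀ k, z k / c' ∈ uIcc (A k.castSucc (Fin.last n)) (z k / c))
    (i j : Fin (n + 1)) :
    |A i j - (Fin.snoc z c' : Fin (n + 1) → ℝ) i / (Fin.snoc z c' : Fin (n + 1) → ℝ) j| ≤
      |A i j - (Fin.snoc z c : Fin (n + 1) → ℝ) i / (Fin.snoc z c : Fin (n + 1) → ℝ) j| := by
  induction j using Fin.lastCases with
  | last =>
    induction i using Fin.lastCases with
    | last => simp [hc.ne', hc'.ne']
    | cast k => simpa using abs_sub_le_abs_sub_of_mem_uIcc (hbetween k)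
  | cast l =>
    induction i using Fin.lastCases with
    | last =>
      have h := inv_mem_uIcc_inv (hA.1 _ _) (div_pos (hz l) hc) (hbetween l)
      rw [hA.2 l.castSucc (Fin.last n)]
      simpa [inv_div] using abs_sub_le_abs_sub_of_mem_uIcc h
    | cast k => simp

lemma not_isEfficient_snoc_of_mem_uIcc (hn : 0 < n) (hA : IsReciprocal A) (hz : PosVec z)
    {c' : ℝ} (hc : 0 < c) (hc' : 0 < c') (hne : c' ≠ c)
    (hbetween : ∀ k, z k / c' ∈ uIcc (A k.castSucc (Fin.last n)) (z k / c)) :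
    ¬ IsEfficient A (Fin.snoc z c) := by
  intro h
  obtain ⟨s, -, hs⟩ := h.2 _ (hz.snoc hc') (snoc_dominates_of_mem_uIcc hA hz hc hc' hbetween)
  have h0 := congrFun hs (Fin.castSucc ⟨0, hn⟩)
  have hlast := congrFun hs (Fin.last n)
  simp only [Fin.snoc_castSucc, Fin.snoc_last, Pi.smul_apply, smul_eq_mul] at h0 hlast
  have hs1 : s = 1 := by
    have := hz ⟨0, hn⟩
    nlinarith
  exact hne (by rw [hlast, hs1, one_mul])

lemma betweenValues_of_isEfficient_snoc (hn : 0 < n) (hA : IsReciprocal A) (hz : PosVec z)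
    (h : IsEfficient A (Fin.snoc z c)) : BetweenValues (lastColRatio A z) c := by
  have : Nonempty (Fin n) := ⟨⟨0, hn⟩⟩
  have hc : 0 < c := by simpa using h.1 (Fin.last n)
  have ha : ∀ k : Fin n, 0 < A k.castSucc (Fin.last n) := fun k => hA.1 _ _
  constructor
  · by_contra! hlt
    obtain ⟨q, hq⟩ := Finite.exists_min (lastColRatio A z)
    have hm : 0 < lastColRatio A z q := hc.trans (hlt q)
    refine not_isEfficient_snoc_of_mem_uIcc hn hA hz hc hm (hlt q).ne'
      (fun k => mem_uIcc_of_le ?_ (div_le_div_of_nonneg_left (hz k).le hc (hlt q).le)) h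
    rw [le_div_iff₀ hm, mul_comm, ← le_div_iff₀ (ha k)]
    exact hq k
  · by_contra! hlt
    obtain ⟨p, hp⟩ := Finite.exists_max (lastColRatio A z)
    have hM : 0 < lastColRatio A z p := div_pos (hz p) (ha p)
    refine not_isEfficient_snoc_of_mem_uIcc hn hA hz hc hM (hlt p).ne
      (fun k => mem_uIcc_of_ge (div_le_div_of_nonneg_left (hz k).le hM (hlt p).le) ?_) h
    rw [div_le_iff₀ hM, mul_comm, ← div_le_iff₀ (ha k)]
    exact hp k

lemma isEfficient_snoc_of_betweenValues (hA : ∀ i j, 0 < A i j)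
    (hz : IsEfficient (delLastMat A) z) (hbetween : BetweenValues (lastColRatio A z) c) :
    IsEfficient A (Fin.snoc z c) := by
  obtain ⟨⟨q, hq⟩, p, hp⟩ := hbetween
  have hc : 0 < c := (div_pos (hz.1 q) (hA _ _)).trans_le hq
  refine ⟨hz.1.snoc hc, fun v hv hdom => ?_⟩
  obtain ⟨s, hs, hinit⟩ := hz.2 (Fin.init v) (fun i => hv _)
    (fun i j => by simpa [delLastMat, Fin.init] using hdom i.castSucc j.castSucc)
  have hvz : ∀ i, v i.castSucc = s * z i := fun i => congrFun hinit i
  have hvn := hv (Fin.last n)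
  have upper : s * c ≤ v (Fin.last n) := by
    have hap : A p.castSucc (Fin.last n) ≤ z p / c := by
      rw [le_div_iff₀ hc, mul_comm, ← le_div_iff₀ (hA _ _)]
      exact hp
    have h := le_of_abs_sub_le_abs_sub hap (by simpa using hdom p.castSucc (Fin.last n))
    rw [hvz, div_le_div_iff₀ hvn hc] at h
    nlinarith [hz.1 p]
  have lower : v (Fin.last n) ≤ s * c := by
    have haq : z q / c ≤ A q.castSucc (Fin.last n) := by
      rw [div_le_iff₀ hc, mul_comm, ← div_le_iff₀ (hA _ _)]
      exact hq
    have h := ge_of_abs_sub_le_abs_sub haq (by simpa using hdom q.castSucc (Fin.last n))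
    rw [hvz, div_le_div_iff₀ hc hvn] at h
    nlinarith [hz.1 q]
  refine ⟨s, hs, ?_⟩
  rw [← Fin.snoc_init_self v, hinit, le_antisymm lower upper]
  funext i
  induction i using Fin.lastCases <;> simp

theorem isEfficient_snoc_iff (hn : 0 < n) (hA : IsReciprocal A)
    (hz : IsEfficient (delLastMat A) z) :
    IsEfficient A (Fin.snoc z c) ↔ BetweenValues (lastColRatio A z) c :=
  ⟨betweenValues_of_isEfficient_snoc hn hA hz.1, isEfficient_snoc_of_betweenValues hA.1 hz⟩

end Extension

/-- with `x`, `y` and `t x + (1-t) y` efficient for `A(n)`, all efficient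
extensions `w`, `v` of `x`, `y` satisfy `t w + (1-t) v ∈ E(A)` iff `x` and `y` have the same
maximal and the same minimal `n`-indices for `A`. -/
theorem convex_combination_of_extensions_efficient_iff {n : ℕ} (hn : 0 < n)
    (A : Matrix (Fin (n + 1)) (Fin (n + 1)) ℝ) (hA : IsReciprocal A)
    (x y : Fin n → ℝ) (hx : IsEfficient (delLastMat A) x) (hy : IsEfficient (delLastMat A) y)
    (t : ℝ) (ht0 : 0 < t) (ht1 : t < 1)
    (hxy : IsEfficient (delLastMat A) (t • x + (1 - t) • y)) :
    ((∀ w v : Fin (n + 1) → ℝ, IsEfficient A w → IsEfficient A v →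
        w ∘ Fin.castSucc = x → v ∘ Fin.castSucc = y →
        IsEfficient A (t • w + (1 - t) • v)) ↔
      (SameMaxIndex A x y ∧ SameMinIndex A x y)) := by
  have : Nonempty (Fin n) := ⟨⟨0, hn⟩⟩
  refine Iff.trans ?_
    (forall_betweenValues_convexComb_iff (f := lastColRatio A x) (g := lastColRatio A y) ht0 ht1)
  simp only [← lastColRatio_smul_add_smul, ← isEfficient_snoc_iff hn hA hx,
    ← isEfficient_snoc_iff hn hA hy, ← isEfficient_snoc_iff hn hA hxy, ← smul_snoc_add_smul_snoc]
  constructor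
  · intro h a b ha hb
    exact h _ _ ha hb Fin.snoc_comp_castSucc Fin.snoc_comp_castSucc
  · intro h w v hw hv hwx hvy
    rw [eq_snoc_of_comp_castSucc_eq hwx] at hw ⊢
    rw [eq_snoc_of_comp_castSucc_eq hvy] at hv ⊢
    exact h _ _ hw hv
end
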